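/- For all real numbers b, c and every z ∈ ℂ with Im z < 0, the function t ↦ (cos(b t) − cos(c t)) exp(−i z t)/t is integrable on (0, ∞) and exp( 2 ∫_0^∞ (cos(b t) − cos(c t)) exp(−i z t)/t dt ) = (z² − c²)/(z² − b²). (These exponentiated integrals are the structure functions appearing in all the Ψ–Ψ and Ψ–X exchange relations of DY_ħ(ŝl(M+1|N+1)), obtained by setting b, c ∈ {0, ħ, 2ħ, 3ħ}.) -/

import Mathlib

open MeasureTheory Set Complex Filter

/-!
Writing `cos (w t) e^{-izt}` as the mean of `e^{-i(z-w)t}` and `e^{-i(z+w)t}` turns the integral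
into half the sum of two complex Frullani integrals
`∫₀^∞ (e^{-αt} - e^{-βt}) / t dt = log β - log α` (for `0 < Re α, Re β`), with
`α, β = i(z ∓ b), i(z ∓ c)`; their exponentials multiply to `(z² - c²) / (z² - b²)`.
The Frullani integral follows from `(e^{-αt} - e^{-βt}) / t = ∫₀¹ (β - α) e^{-(α + u(β - α))t} du`
by exchanging the order of integration, the inner `t`-integral being `(β - α) / (α + u(β - α))`.
-/

section SegmentFrullani

variable {α β : ℂ}

lemma min_re_le_re_add_mul_sub {u : ℝ} (hu : u ∈ Icc (0 : ℝ) 1) :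
    min α.re β.re ≤ (α + u * (β - α)).re := by
  simp only [add_re, re_ofReal_mul, sub_re]
  nlinarith [mul_nonneg (sub_nonneg.2 hu.2) (sub_nonneg.2 (min_le_left α.re β.re)),
    mul_nonneg hu.1 (sub_nonneg.2 (min_le_right α.re β.re))]

lemma re_add_mul_sub_pos (hα : 0 < α.re) (hβ : 0 < β.re) {u : ℝ} (hu : u ∈ Icc (0 : ℝ) 1) :
    0 < (α + u * (β - α)).re :=
  (lt_min hα hβ).trans_le (min_re_le_re_add_mul_sub hu)

lemma integral_mul_cexp_segment {t : ℝ} (ht : t ≠ 0) :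
    ∫ u in (0 : ℝ)..1, (β - α) * exp (-(α + u * (β - α)) * t)
      = (exp (-α * t) - exp (-β * t)) / t := by
  have hderiv : ∀ u : ℝ, HasDerivAt (fun u : ℝ => -exp (-(α + u * (β - α)) * t) / t)
      ((β - α) * exp (-(α + u * (β - α)) * t)) u := fun u => by
    have := (((((hasDerivAt_id (u : ℂ)).mul_const (β - α)).const_add α).neg.mul_const
      (t : ℂ)).cexp.neg).div_const (t : ℂ)
    refine (this.congr_deriv ?_).comp_ofReal
    have htC : (t : ℂ) ≠ 0 := ofReal_ne_zero.2 ht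
    simp only [id, Pi.neg_apply]
    field_simp
  rw [intervalIntegral.integral_eq_sub_of_hasDerivAt (fun u _ => hderiv u)
    (Continuous.intervalIntegrable (by fun_prop) _ _)]
  push_cast
  ring_nf

lemma integral_div_segment_eq_log_sub_log (hα : 0 < α.re) (hβ : 0 < β.re) :
    ∫ u in (0 : ℝ)..1, (β - α) / (α + u * (β - α)) = log β - log α := by
  have hderiv : ∀ u ∈ uIcc (0 : ℝ) 1, HasDerivAt (fun u : ℝ => log (α + u * (β - α)))
      ((β - α) / (α + u * (β - α))) u := fun u hu => by
    rw [uIcc_of_le zero_le_one] at hu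
    have hlog := hasDerivAt_log (Or.inl (re_add_mul_sub_pos hα hβ hu))
    have := hlog.comp (u : ℂ) (((hasDerivAt_id (u : ℂ)).mul_const (β - α)).const_add α)
    refine (this.congr_deriv ?_).comp_ofReal
    simp [div_eq_inv_mul]
  have hcont : ContinuousOn (fun u : ℝ => (β - α) / (α + u * (β - α))) (uIcc 0 1) := by
    refine continuousOn_const.div (by fun_prop) fun u hu => ?_
    rw [uIcc_of_le zero_le_one] at hu
    exact ne_zero_of_re_pos (re_add_mul_sub_pos hα hβ hu)
  rw [intervalIntegral.integral_eq_sub_of_hasDerivAt hderiv hcont.intervalIntegrable]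
  simp

lemma integrable_mul_cexp_segment (hα : 0 < α.re) (hβ : 0 < β.re) :
    Integrable (fun p : ℝ × ℝ => (β - α) * exp (-(α + p.2 * (β - α)) * p.1))
      ((volume.restrict (Ioi 0)).prod (volume.restrict (Ioc 0 1))) := by
  set m := min α.re β.re
  have hbound : Integrable (fun p : ℝ × ℝ => Real.exp (-m * p.1) * ‖β - α‖)
      ((volume.restrict (Ioi 0)).prod (volume.restrict (Ioc 0 1))) :=
    (exp_neg_integrableOn_Ioi 0 (lt_min hα hβ)).mul_prod
      (integrableOn_const measure_Ioc_lt_top.ne)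
  refine hbound.mono' (Continuous.aestronglyMeasurable (by fun_prop)) ?_
  rw [Measure.prod_restrict, ae_restrict_iff' (measurableSet_Ioi.prod measurableSet_Ioc)]
  filter_upwards with ⟨t, u⟩ ⟨ht, hu⟩
  have hre : (-(α + u * (β - α)) * t).re = -(α + u * (β - α)).re * t := by simp
  rw [norm_mul, norm_exp, hre, mul_comm]
  gcongr
  exacts [ht.le, min_re_le_re_add_mul_sub (Ioc_subset_Icc_self hu)]

theorem integrableOn_cexp_neg_sub_div (hα : 0 < α.re) (hβ : 0 < β.re) :
    IntegrableOn (fun t : ℝ => (exp (-α * t) - exp (-β * t)) / t) (Ioi 0) := by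
  refine (integrable_mul_cexp_segment hα hβ).integral_prod_left.congr ?_
  filter_upwards [self_mem_ae_restrict measurableSet_Ioi] with t ht
  rw [← intervalIntegral.integral_of_le zero_le_one, integral_mul_cexp_segment ht.ne']

theorem integral_cexp_neg_sub_div (hα : 0 < α.re) (hβ : 0 < β.re) :
    ∫ t : ℝ in Ioi 0, (exp (-α * t) - exp (-β * t)) / t = log β - log α := by
  have hinner : ∀ t ∈ Ioi (0 : ℝ), (exp (-α * t) - exp (-β * t)) / t
      = ∫ u in Ioc (0 : ℝ) 1, (β - α) * exp (-(α + u * (β - α)) * t) := fun t ht => by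
    rw [← intervalIntegral.integral_of_le zero_le_one, integral_mul_cexp_segment ht.ne']
  have houter : ∀ u ∈ Ioc (0 : ℝ) 1, ∫ t : ℝ in Ioi 0, (β - α) * exp (-(α + u * (β - α)) * t)
      = (β - α) / (α + u * (β - α)) := fun u hu => by
    have hre := re_add_mul_sub_pos hα hβ (Ioc_subset_Icc_self hu)
    rw [integral_const_mul, integral_exp_mul_complex_Ioi (by rw [neg_re]; exact neg_lt_zero.2 hre)]
    have hne := ne_zero_of_re_pos hre
    simp only [ofReal_zero, mul_zero, exp_zero]
    field_simp
  calc ∫ t : ℝ in Ioi 0, (exp (-α * t) - exp (-β * t)) / t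
      = ∫ t : ℝ in Ioi 0, ∫ u in Ioc (0 : ℝ) 1, (β - α) * exp (-(α + u * (β - α)) * t) :=
        setIntegral_congr_fun measurableSet_Ioi hinner
    _ = ∫ u in Ioc (0 : ℝ) 1, ∫ t : ℝ in Ioi 0, (β - α) * exp (-(α + u * (β - α)) * t) :=
        integral_integral_swap (integrable_mul_cexp_segment hα hβ)
    _ = ∫ u in Ioc (0 : ℝ) 1, (β - α) / (α + u * (β - α)) :=
        setIntegral_congr_fun measurableSet_Ioc houter
    _ = log β - log α := by
        rw [← intervalIntegral.integral_of_le zero_le_one,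
          integral_div_segment_eq_log_sub_log hα hβ]

theorem exp_integral_cexp_neg_sub_div (hα : 0 < α.re) (hβ : 0 < β.re) :
    exp (∫ t : ℝ in Ioi 0, (exp (-α * t) - exp (-β * t)) / t) = β / α := by
  rw [integral_cexp_neg_sub_div hα hβ, exp_sub, exp_log (ne_zero_of_re_pos hβ),
    exp_log (ne_zero_of_re_pos hα)]

end SegmentFrullani

lemma cos_mul_cexp_eq (w : ℝ) (z : ℂ) (t : ℝ) :
    cos (w * t) * exp (-I * z * t)
      = (exp (-(I * (z - w)) * t) + exp (-(I * (z + w)) * t)) / 2 := by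
  rw [cos, div_mul_eq_mul_div, add_mul, ← exp_add, ← exp_add]
  congr 3 <;> ring

/-- For real `b, c` and `z ∈ ℂ` with `Im z < 0`, the function
`t ↦ (cos(b t) - cos(c t)) exp(-i z t)/t` is integrable on `(0, ∞)` and
`exp(2 ∫_0^∞ (cos(b t) - cos(c t)) exp(-i z t)/t dt) = (z² - c²)/(z² - b²)`.
These exponentiated integrals are the structure functions of the exchange relations of
`DY_ħ(ŝl(M+1|N+1))`, obtained for `b, c ∈ {0, ħ, 2ħ, 3ħ}`. -/
theorem exp_two_mul_cos_frullani_integral (b c : ℝ) (z : ℂ) (hz : z.im < 0) :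
    MeasureTheory.IntegrableOn
      (fun t : ℝ =>
        (Complex.cos (b * t) - Complex.cos (c * t)) * Complex.exp (-Complex.I * z * t) / t)
      (Set.Ioi 0) ∧
    Complex.exp (2 * ∫ t : ℝ in Set.Ioi 0,
        (Complex.cos (b * t) - Complex.cos (c * t)) * Complex.exp (-Complex.I * z * t) / t)
      = (z ^ 2 - (c : ℂ) ^ 2) / (z ^ 2 - (b : ℂ) ^ 2) := by
  have hpos : ∀ w : ℝ, 0 < (I * (z - w)).re ∧ 0 < (I * (z + w)).re := fun w => by
    simp only [I_mul_re, sub_im, add_im, ofReal_im, sub_zero, add_zero]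
    exact ⟨neg_pos.2 hz, neg_pos.2 hz⟩
  set f : ℂ → ℂ → ℝ → ℂ := fun α β t => (exp (-α * t) - exp (-β * t)) / t
  have hsplit : (fun t : ℝ => (cos (b * t) - cos (c * t)) * exp (-I * z * t) / t)
      = fun t => (f (I * (z - b)) (I * (z - c)) t + f (I * (z + b)) (I * (z + c)) t) / 2 := by
    funext t
    rw [sub_mul, cos_mul_cexp_eq, cos_mul_cexp_eq]
    ring
  have hminus := integrableOn_cexp_neg_sub_div (hpos b).1 (hpos c).1
  have hplus := integrableOn_cexp_neg_sub_div (hpos b).2 (hpos c).2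
  refine ⟨hsplit ▸ (hminus.add hplus).div_const 2, ?_⟩
  rw [hsplit, integral_div, integral_add hminus hplus, mul_div_cancel₀ _ two_ne_zero, exp_add,
    exp_integral_cexp_neg_sub_div (hpos b).1 (hpos c).1,
    exp_integral_cexp_neg_sub_div (hpos b).2 (hpos c).2, div_mul_div_comm]
  have hprod : ∀ w : ℂ, I * (z - w) * (I * (z + w)) = -(z ^ 2 - w ^ 2) := fun w => by
    linear_combination (z ^ 2 - w ^ 2) * I_sq
  rw [hprod, hprod, neg_div_neg_eq]
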